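/- arXiv:1303.6746 — 3 statements merged into one kernel-verified Lean document; each statement's English description precedes it below -/
import Mathlib

section
/- Fix K ≥ 2 arms and functions U, L : {1,…,K} → ℝ; set s_k = U_k − L_k and B_k = max_{i≠k} U_i − L_k. Let J be an arm with B_J ≤ B_k for all arms k, and let j ≠ J be an arm with U_j ≥ U_i for all arms i ≠ J. Then: (i) if s_j ≥ s_J, then L_j ≤ L_J; and (ii) if s_J ≥ s_j, then U_j ≤ U_J. -/
/-!
Since `j` is the best runner-up, `B_J = U_j − L_J`, while every `U_i` is at most
`max U_J U_j`, so `B_j ≤ max U_J U_j − L_j`. Minimality of `B_J` thus gives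
`U_j − L_J ≤ max U_J U_j − L_j`, and both claims follow by comparing `U_J` with `U_j`.
-/

open Finset

/-- With at least two arms, the set of arms other than `k` is nonempty. -/
lemma eraseNe {K : ℕ} (hK : 2 ≤ K) (k : Fin K) :
    ((univ : Finset (Fin K)).erase k).Nonempty := by
  apply card_pos.mp
  rw [card_erase_of_mem (mem_univ k), card_univ, Fintype.card_fin]
  omega

/-- The gap index `B_k = max_{i ≠ k} U_i − L_k`. -/
noncomputable def gapB {K : ℕ} (hK : 2 ≤ K) (U L : Fin K → ℝ) (k : Fin K) : ℝ :=
  ((univ : Finset (Fin K)).erase k).sup' (eraseNe hK k) U - L k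

section gapB

variable {K : ℕ} (hK : 2 ≤ K) {U : Fin K → ℝ} (L : Fin K → ℝ) {J j : Fin K}

lemma gapB_eq_of_forall_le (hjJ : j ≠ J) (hj : ∀ i, i ≠ J → U i ≤ U j) :
    gapB hK U L J = U j - L J := by
  rw [gapB, le_antisymm (sup'_le _ _ fun i hi ↦ hj i (ne_of_mem_erase hi))
    (le_sup' U (mem_erase.mpr ⟨hjJ, mem_univ j⟩))]

lemma gapB_le_max_sub (hj : ∀ i, i ≠ J → U i ≤ U j) (k : Fin K) :
    gapB hK U L k ≤ max (U J) (U j) - L k := by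
  refine sub_le_sub_right (sup'_le _ _ fun i _ ↦ ?_) _
  rcases eq_or_ne i J with rfl | hiJ
  · exact le_max_left _ _
  · exact (hj i hiJ).trans (le_max_right _ _)

end gapB

/-- Lemma A2: if `J` minimizes the gap index and `j ≠ J` is the best runner-up
(maximizing `U` among arms other than `J`), then:
(i) if `s_j ≥ s_J` then `L_j ≤ L_J`, and (ii) if `s_J ≥ s_j` then `U_j ≤ U_J`,
where `s_k = U_k − L_k` is the confidence diameter. -/
theorem bound_order {K : ℕ} (hK : 2 ≤ K) (U L : Fin K → ℝ) (J j : Fin K)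
    (hJ : ∀ k, gapB hK U L J ≤ gapB hK U L k)
    (hjJ : j ≠ J) (hj : ∀ i, i ≠ J → U i ≤ U j) :
    ((U J - L J ≤ U j - L j) → L j ≤ L J) ∧
      ((U j - L j ≤ U J - L J) → U j ≤ U J) := by
  have hB : U j - L J ≤ max (U J) (U j) - L j := by
    simpa only [gapB_eq_of_forall_le hK L hjJ hj] using
      (hJ j).trans (gapB_le_max_sub hK L hj j)
  rcases le_total (U J) (U j) with hUJ | hUj
  · rw [max_eq_right hUJ] at hB
    exact ⟨fun _ ↦ by linarith, fun _ ↦ by linarith⟩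
  · rw [max_eq_left hUj] at hB
    exact ⟨fun _ ↦ by linarith, fun _ ↦ hUj⟩
end

section
/- Fix K ≥ 2 arms and functions U, L : {1,…,K} → ℝ; set s_k = U_k − L_k and B_k = max_{i≠k} U_i − L_k. Let J be an arm with B_J ≤ B_k for all arms k, let j ≠ J be an arm with U_j ≥ U_i for all arms i ≠ J, and let a ∈ {j, J} be an arm with s_a = max(s_j, s_J). Then the minimal gap index is bounded by the uncertainty of the pulled arm: B_J ≤ s_a. -/
open Finset

lemma gapB_le_sub_of_forall_ne_le {K : ℕ} (hK : 2 ≤ K) (U L : Fin K → ℝ) {k : Fin K}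
    (hk : ∀ i, i ≠ k → U i ≤ U k) : gapB hK U L k ≤ U k - L k :=
  sub_le_sub_right (sup'_le _ _ fun i hi => hk i (ne_of_mem_erase hi)) _

theorem min_gap_le_uncertainty_general {K : ℕ} (hK : 2 ≤ K) (U L : Fin K → ℝ) (J j a : Fin K)
    (hJ : ∀ k, gapB hK U L J ≤ gapB hK U L k)
    (hj : ∀ i, i ≠ J → U i ≤ U j)
    (haMax : U a - L a = max (U j - L j) (U J - L J)) :
    gapB hK U L J ≤ U a - L a := by
  rw [haMax]
  rcases le_total (U j) (U J) with hjJ | hJj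
  · exact le_max_of_le_right
      (gapB_le_sub_of_forall_ne_le hK U L fun i hi => (hj i hi).trans hjJ)
  · have hj_top : ∀ i, i ≠ j → U i ≤ U j := fun i _ => by
      by_cases hiJ : i = J
      · exact hiJ ▸ hJj
      · exact hj i hiJ
    exact le_max_of_le_left ((hJ j).trans (gapB_le_sub_of_forall_ne_le hK U L hj_top))

/-- Corollary A3: if `J` minimizes the gap index, `j ≠ J` is the best runner-up,
and the pulled arm `a ∈ {j, J}` has the larger confidence diameter
`s_a = max(s_j, s_J)` (where `s_k = U_k − L_k`), then the minimal gap index is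
bounded above by the uncertainty of the pulled arm: `B_J ≤ s_a`. -/
theorem min_gap_le_uncertainty {K : ℕ} (hK : 2 ≤ K) (U L : Fin K → ℝ) (J j a : Fin K)
    (hJ : ∀ k, gapB hK U L J ≤ gapB hK U L k)
    (hjJ : j ≠ J) (hj : ∀ i, i ≠ J → U i ≤ U j)
    (haMem : a = j ∨ a = J)
    (haMax : U a - L a = max (U j - L j) (U J - L J)) :
    gapB hK U L J ≤ U a - L a :=
  min_gap_le_uncertainty_general hK U L J j a hJ hj haMax
end

section
/- Let x_1, …, x_K ∈ ℝ^d with x_k ≠ 0, let σ, η > 0, let β ≥ 0, and let N_1, …, N_K be nonnegative reals. Let Σ̂ = (σ^{-2} Σ_{i=1}^K N_i x_i x_iᵀ + η^{-2} I)⁻¹. Then the confidence diameter of arm k satisfies 2β √(x_kᵀ Σ̂ x_k) ≤ 2β √( σ² ‖x_k‖² / (σ²/η² + N_k ‖x_k‖²) ); i.e., s_k is bounded by g_k(N_k) where g_k(N) = 2β √(σ² ‖x_k‖² / (σ²/η² + N ‖x_k‖²)). -/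
open Matrix Finset

/-!
Put `A = Σ̂⁻¹`, `u = x_k`, `y = A⁻¹ u` and `t = u ⬝ᵥ y = y ⬝ᵥ A y`. The precision matrix `A`
dominates its `η⁻² I` part and its `k`-th rank-one term, so `t ≥ η⁻² ‖y‖² + σ⁻² N_k t²`.
Cauchy–Schwarz `t² ≤ ‖u‖² ‖y‖²` eliminates `‖y‖²`, leaving `t (η⁻² + σ⁻² N_k ‖u‖²) ≤ ‖u‖²`,
which is the bound after multiplying numerator and denominator by `σ²`.
-/

section

variable {ι n : Type*} [Fintype ι] [Fintype n]

lemma dotProduct_mulVec_vecMulVec_self (u v : n → ℝ) :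
    v ⬝ᵥ (vecMulVec u u *ᵥ v) = (u ⬝ᵥ v) ^ 2 := by
  rw [vecMulVec_mulVec, op_smul_eq_smul, dotProduct_smul, smul_eq_mul, dotProduct_comm v, sq]

lemma dotProduct_sum_smul_vecMulVec_mulVec (w : ι → ℝ) (x : ι → n → ℝ) (v : n → ℝ) :
    v ⬝ᵥ ((∑ i, w i • vecMulVec (x i) (x i)) *ᵥ v) = ∑ i, w i * (x i ⬝ᵥ v) ^ 2 := by
  simp only [sum_mulVec, smul_mulVec, dotProduct_sum, dotProduct_smul, smul_eq_mul,
    dotProduct_mulVec_vecMulVec_self]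

lemma dotProduct_sq_le_dotProduct_self_mul (u v : n → ℝ) :
    (u ⬝ᵥ v) ^ 2 ≤ (u ⬝ᵥ u) * (v ⬝ᵥ v) := by
  simpa only [dotProduct, sq] using sum_mul_sq_le_sq_mul_sq univ u v

end

lemma le_div_of_mul_add_mul_sq_le {t s a b X : ℝ} (ha : 0 < a) (hb : 0 ≤ b) (hX : 0 ≤ X)
    (hquad : a * s + b * t ^ 2 ≤ t) (hcs : t ^ 2 ≤ X * s) : t ≤ X / (a + b * X) := by
  rcases le_or_gt t 0 with ht | ht
  · exact ht.trans (by positivity)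
  have hX : 0 < X := by
    rcases hX.lt_or_eq with hX | rfl
    · exact hX
    · nlinarith
  rw [le_div_iff₀ (by positivity)]
  have : t * (t * (a + b * X)) ≤ t * X := by nlinarith
  exact le_of_mul_le_mul_left this ht

section

variable {n : Type*} [Fintype n] [DecidableEq n]

lemma isUnit_of_dotProduct_mulVec_ge {A : Matrix n n ℝ} {a : ℝ} (ha : 0 < a)
    (hA : ∀ v, a * (v ⬝ᵥ v) ≤ v ⬝ᵥ (A *ᵥ v)) : IsUnit A := by
  rw [← mulVec_injective_iff_isUnit]
  intro v w hvw
  have hker : A *ᵥ (v - w) = 0 := by rw [mulVec_sub, hvw, sub_self]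
  have hself : (v - w) ⬝ᵥ (v - w) ≤ 0 := by
    have := hA (v - w)
    rw [hker, dotProduct_zero] at this
    exact nonpos_of_mul_nonpos_right this ha
  exact sub_eq_zero.mp <|
    dotProduct_self_eq_zero.mp (hself.antisymm (dotProduct_self_star_nonneg _))

theorem dotProduct_inv_mulVec_le {A : Matrix n n ℝ} {u : n → ℝ} {a b : ℝ} (ha : 0 < a)
    (hb : 0 ≤ b) (hA : ∀ v, a * (v ⬝ᵥ v) + b * (u ⬝ᵥ v) ^ 2 ≤ v ⬝ᵥ (A *ᵥ v)) :
    u ⬝ᵥ (A⁻¹ *ᵥ u) ≤ (u ⬝ᵥ u) / (a + b * (u ⬝ᵥ u)) := by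
  have hunit : IsUnit A.det := (isUnit_iff_isUnit_det A).mp <|
    isUnit_of_dotProduct_mulVec_ge ha fun v ↦ (le_add_of_nonneg_right (by positivity)).trans (hA v)
  set y := A⁻¹ *ᵥ u
  have hy : A *ᵥ y = u := by rw [mulVec_mulVec, mul_nonsing_inv A hunit, one_mulVec]
  refine le_div_of_mul_add_mul_sq_le ha hb (dotProduct_self_star_nonneg u) ?_
    (dotProduct_sq_le_dotProduct_self_mul u y)
  simpa only [← hy, dotProduct_comm (A *ᵥ y) y] using hA y

end

/-- The confidence diameter of arm `k` in the linear-Gaussian model is bounded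
by `g_k(N_k)`: with posterior covariance
`Σ̂ = (σ⁻² Σ_i N_i x_i x_iᵀ + η⁻² I)⁻¹`, one has
`2β √(x_kᵀ Σ̂ x_k) ≤ 2β √(σ² ‖x_k‖² / (σ²/η² + N_k ‖x_k‖²))`,
where `‖x_k‖² = x_k ⬝ᵥ x_k` is the squared Euclidean norm. -/
theorem confidence_diameter_bound {d K : ℕ} (x : Fin K → (Fin d → ℝ))
    (k : Fin K)
    (σ η β : ℝ) (hσ : 0 < σ) (hη : 0 < η) (hβ : 0 ≤ β)
    (N : Fin K → ℝ) (hN : ∀ i, 0 ≤ N i) :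
    let Shat : Matrix (Fin d) (Fin d) ℝ :=
      (σ ^ (-2 : ℤ) • ∑ i, N i • vecMulVec (x i) (x i) +
        η ^ (-2 : ℤ) • (1 : Matrix (Fin d) (Fin d) ℝ))⁻¹
    2 * β * Real.sqrt (x k ⬝ᵥ (Shat *ᵥ x k)) ≤
      2 * β * Real.sqrt (σ ^ 2 * (x k ⬝ᵥ x k) /
        (σ ^ 2 / η ^ 2 + N k * (x k ⬝ᵥ x k))) := by
  intro Shat
  have hprec : ∀ v, η ^ (-2 : ℤ) * (v ⬝ᵥ v) + σ ^ (-2 : ℤ) * N k * (x k ⬝ᵥ v) ^ 2 ≤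
      v ⬝ᵥ ((σ ^ (-2 : ℤ) • ∑ i, N i • vecMulVec (x i) (x i) +
        η ^ (-2 : ℤ) • (1 : Matrix (Fin d) (Fin d) ℝ)) *ᵥ v) := by
    intro v
    rw [add_mulVec, smul_mulVec, smul_mulVec, one_mulVec, dotProduct_add, dotProduct_smul,
      dotProduct_smul, dotProduct_sum_smul_vecMulVec_mulVec, smul_eq_mul, smul_eq_mul, mul_assoc]
    have hk := single_le_sum (fun i _ ↦ mul_nonneg (hN i) (sq_nonneg (x i ⬝ᵥ v))) (mem_univ k)
    rw [add_comm]
    gcongr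
  have hrhs : σ ^ 2 * (x k ⬝ᵥ x k) / (σ ^ 2 / η ^ 2 + N k * (x k ⬝ᵥ x k)) =
      (x k ⬝ᵥ x k) / (η ^ (-2 : ℤ) + σ ^ (-2 : ℤ) * N k * (x k ⬝ᵥ x k)) := by
    field_simp
  rw [hrhs]
  gcongr
  exact dotProduct_inv_mulVec_le (by positivity) (mul_nonneg (by positivity) (hN k)) hprec
end
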